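/- Let K be an N×N real symmetric positive definite matrix and let α > 0. Then the matrix K_{Z*}(K, α) := (1/2)((K² + αK)^{1/2} − K) is symmetric positive definite. -/

import Mathlib

/-!
Every matrix in sight is a function of `K` in the continuous functional calculus:
`Kzstar K α = f K` with `f x = (√(x² + αx) - x) / 2`. Since `f` is positive on `(0, ∞)`, which
contains the spectrum of `K`, the matrix `f K` is positive definite.
-/

open Matrix Classical

/-- The positive semidefinite square root of a matrix (junk value `0` if the matrix is not
positive semidefinite). -/
noncomputable def matSqrt {N : ℕ} (A : Matrix (Fin N) (Fin N) ℝ) : Matrix (Fin N) (Fin N) ℝ :=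
  if h : A.PosSemidef then
    h.1.eigenvectorUnitary.1 * diagonal ((↑) ∘ (√·) ∘ h.1.eigenvalues) *
      (star h.1.eigenvectorUnitary : Matrix (Fin N) (Fin N) ℝ)
  else 0

/-- The optimal distortion covariance matrix
`K_{Z*}(K, α) = (1/2)((K² + αK)^{1/2} − K)`. -/
noncomputable def Kzstar {N : ℕ} (K : Matrix (Fin N) (Fin N) ℝ) (α : ℝ) :
    Matrix (Fin N) (Fin N) ℝ :=
  (1 / 2 : ℝ) • (matSqrt (K ^ 2 + α • K) - K)

section
open scoped MatrixOrder ComplexOrder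

theorem Matrix.PosDef.cfc_posDef {n 𝕜 : Type*} [Fintype n] [DecidableEq n] [RCLike 𝕜]
    {A : Matrix n n 𝕜} (hA : A.PosDef) {f : ℝ → ℝ} (hf : ∀ x, 0 < x → 0 < f x) :
    (cfc f A).PosDef :=
  IsStrictlyPositive.posDef <|
    (cfc_isStrictlyPositive_iff f A (A.finite_real_spectrum.continuousOn f) hA.1).mpr
      fun x hx => hf x (hA.isStrictlyPositive.spectrum_pos hx)

end

theorem matSqrt_eq_cfc {N : ℕ} {A : Matrix (Fin N) (Fin N) ℝ} (hA : A.PosSemidef) :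
    matSqrt A = cfc Real.sqrt A := by
  rw [matSqrt, dif_pos hA, hA.1.cfc_eq]
  rfl

theorem Kzstar_eq_cfc {N : ℕ} {K : Matrix (Fin N) (Fin N) ℝ} (hK : K.PosSemidef) {α : ℝ}
    (hα : 0 ≤ α) : Kzstar K α = cfc (fun x => (1 / 2 : ℝ) * (√(x ^ 2 + α * x) - x)) K := by
  have hK' : IsSelfAdjoint K := hK.1
  have hpoly : K ^ 2 + α • K = cfc (fun x => x ^ 2 + α * x) K := by
    rw [cfc_add .., cfc_pow_id .., cfc_const_mul_id ..]
  rw [Kzstar, matSqrt_eq_cfc ((hK.pow 2).add (hK.smul hα)), hpoly, ← cfc_comp' ..,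
    cfc_const_mul .., cfc_sub .., cfc_id' ..]

theorem Real.lt_sqrt_sq_add_mul {x a : ℝ} (hx : 0 < x) (ha : 0 < a) : x < √(x ^ 2 + a * x) :=
  Real.lt_sqrt_of_sq_lt (by nlinarith)

theorem stmt_3 {N : ℕ} (K : Matrix (Fin N) (Fin N) ℝ) (hK : K.PosDef)
    (α : ℝ) (hα : 0 < α) : (Kzstar K α).PosDef := by
  rw [Kzstar_eq_cfc hK.posSemidef hα.le]
  refine hK.cfc_posDef fun x hx => ?_
  have := Real.lt_sqrt_sq_add_mul hx hα
  linarith
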